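/- Let a, b, c be the tree automorphisms of the binary tree defined by the wreath recursions a = σ(a,c), b = σ(c,a), c = (a,a) (automaton number 2212). Then in the generated group c = a⁻², the element x = ab⁻¹ has infinite order and satisfies a x a⁻¹ = x⁻¹, and the group generated by a, b, c is isomorphic to the Klein bottle group with presentation ⟨a, b | a² = b²⟩ (equivalently ⟨x, a | a x a⁻¹ = x⁻¹⟩), sending the presentation generators to a and b. -/

import Mathlib

/-- An invertible automaton over the two-letter alphabet `Bool`:
a set of states `Q`, a transition map and an output map such that each state
acts on the alphabet by a permutation. -/
structure BinAutomaton (Q : Type*) where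
  trans : Q → Bool → Q
  out : Q → Bool → Bool
  out_bij : ∀ q, Function.Bijective (out q)

namespace BinAutomaton

variable {Q : Type*} (A : BinAutomaton Q)

/-- The action of a state on finite binary words:
`q(xw) = ρ(q,x) · (τ(q,x))(w)`. -/
def act : Q → List Bool → List Bool
  | _, [] => []
  | q, x :: w => A.out q x :: act (A.trans q x) w

theorem act_injective (q : Q) : Function.Injective (A.act q) := by
  intro u
  induction u generalizing q with
  | nil =>
    intro v h
    cases v with
    | nil => rfl
    | cons y v => simp [act] at h
  | cons x u ih =>
    intro v h
    cases v with
    | nil => simp [act] at h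
    | cons y v =>
      simp only [act, List.cons.injEq] at h
      obtain ⟨h1, h2⟩ := h
      obtain rfl : x = y := (A.out_bij q).1 h1
      rw [ih _ h2]

theorem act_surjective (q : Q) : Function.Surjective (A.act q) := by
  intro v
  induction v generalizing q with
  | nil => exact ⟨[], rfl⟩
  | cons y v ih =>
    obtain ⟨x, hx⟩ := (A.out_bij q).2 y
    obtain ⟨w, hw⟩ := ih (A.trans q x)
    exact ⟨x :: w, by simp [act, hx, hw]⟩

/-- The tree automorphism defined by the state `q`. -/
noncomputable def perm (q : Q) : Equiv.Perm (List Bool) :=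
  Equiv.ofBijective (A.act q) ⟨A.act_injective q, A.act_surjective q⟩

/-- The group generated by the automaton: the subgroup of the group of
bijections of the binary tree generated by the states. -/
noncomputable def autGroup : Subgroup (Equiv.Perm (List Bool)) :=
  Subgroup.closure (Set.range A.perm)

end BinAutomaton

/-- Helper constructing a 3-state automaton from the sections at `0`, the
sections at `1`, and the activity of each state. -/
def mkAut3 (t0 t1 : Fin 3 → Fin 3) (actv : Fin 3 → Bool) : BinAutomaton (Fin 3) where
  trans q x := cond x (t1 q) (t0 q)
  out q x := xor (actv q) x
  out_bij q := by
    have h : ∀ b : Bool, Function.Bijective fun x => xor b x := by decide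
    exact h (actv q)

/-- Automaton number 2212:
`a = σ(a,c)`, `b = σ(c,a)`, `c = (a,a)` (states `0 = a`, `1 = b`, `2 = c`). -/
def A2212 : BinAutomaton (Fin 3) :=
  mkAut3 ![0, 2, 0] ![2, 0, 0] ![true, true, false]

noncomputable def a : Equiv.Perm (List Bool) := A2212.perm 0
noncomputable def b : Equiv.Perm (List Bool) := A2212.perm 1
noncomputable def c : Equiv.Perm (List Bool) := A2212.perm 2

/-- The single relation `a² = b²` of the Klein bottle group `⟨a, b ∣ a² = b²⟩`. -/
def relsKlein : Set (FreeGroup (Fin 2)) :=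
  {FreeGroup.of 0 ^ 2 * (FreeGroup.of 1 ^ 2)⁻¹}


section Aut2212Aux

@[simp] lemma perm_apply (q : Fin 3) (w : List Bool) : A2212.perm q w = A2212.act q w := rfl

@[simp] lemma act0_nil : A2212.act 0 [] = [] := rfl
@[simp] lemma act2_nil : A2212.act 2 [] = [] := rfl
@[simp] lemma act0_false (w : List Bool) :
    A2212.act 0 (false :: w) = true :: A2212.act 0 w := rfl
@[simp] lemma act0_true (w : List Bool) :
    A2212.act 0 (true :: w) = false :: A2212.act 2 w := rfl
@[simp] lemma act1_false (w : List Bool) :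
    A2212.act 1 (false :: w) = true :: A2212.act 2 w := rfl
@[simp] lemma act1_true (w : List Bool) :
    A2212.act 1 (true :: w) = false :: A2212.act 0 w := rfl
@[simp] lemma act2_false (w : List Bool) :
    A2212.act 2 (false :: w) = false :: A2212.act 0 w := rfl
@[simp] lemma act2_true (w : List Bool) :
    A2212.act 2 (true :: w) = true :: A2212.act 0 w := rfl

lemma key (w : List Bool) :
    A2212.act 0 (A2212.act 2 (A2212.act 0 w)) = w ∧
    A2212.act 2 (A2212.act 0 (A2212.act 0 w)) = w ∧
    A2212.act 0 (A2212.act 0 (A2212.act 2 w)) = w := by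
  induction w with
  | nil => exact ⟨rfl, rfl, rfl⟩
  | cons x w ih =>
    obtain ⟨h1, h2, h3⟩ := ih
    cases x <;> simp [h1, h2, h3]

lemma comm02 (w : List Bool) :
    A2212.act 0 (A2212.act 2 w) = A2212.act 2 (A2212.act 0 w) := by
  induction w with
  | nil => rfl
  | cons x w ih => cases x <;> simp [ih]

lemma hca : c = (a * a)⁻¹ := by
  have h1 : a * (c * a) = 1 := by
    apply Equiv.ext; intro w
    simpa [a, c, Equiv.Perm.mul_apply] using (key w).1
  have h2 : c * a = a⁻¹ := eq_inv_of_mul_eq_one_right h1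
  calc c = (c * a) * a⁻¹ := by group
    _ = (a * a)⁻¹ := by rw [h2]; group

lemma hab : a * a = b * b := by
  apply Equiv.ext; intro w
  cases w with
  | nil => rfl
  | cons x w => cases x <;> simp [a, b, Equiv.Perm.mul_apply, comm02]

/-- Diagonal pairing: `(g, h)` acts as `g` below `0` and `h` below `1`. -/
def diagFun (g h : List Bool → List Bool) : List Bool → List Bool
  | [] => []
  | (x :: w) => x :: (cond x (h w) (g w))

@[simp] lemma diagFun_nil (g h : List Bool → List Bool) : diagFun g h [] = [] := rfl
@[simp] lemma diagFun_false (g h : List Bool → List Bool) (w : List Bool) :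
    diagFun g h (false :: w) = false :: g w := rfl
@[simp] lemma diagFun_true (g h : List Bool → List Bool) (w : List Bool) :
    diagFun g h (true :: w) = true :: h w := rfl

noncomputable def ψ : Equiv.Perm (List Bool) × Equiv.Perm (List Bool) →* Equiv.Perm (List Bool) where
  toFun p :=
    { toFun := diagFun p.1 p.2
      invFun := diagFun p.1.symm p.2.symm
      left_inv := by
        intro w
        cases w with
        | nil => rfl
        | cons x w => cases x <;> simp
      right_inv := by
        intro w
        cases w with
        | nil => rfl
        | cons x w => cases x <;> simp }
  map_one' := by
    apply Equiv.ext; intro w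
    cases w with
    | nil => rfl
    | cons x w => cases x <;> rfl
  map_mul' p q := by
    apply Equiv.ext; intro w
    cases w with
    | nil => rfl
    | cons x w => cases x <;> simp [Equiv.Perm.mul_apply]

@[simp] lemma ψ_apply_false (g h : Equiv.Perm (List Bool)) (w : List Bool) :
    ψ (g, h) (false :: w) = false :: g w := rfl
@[simp] lemma ψ_apply_true (g h : Equiv.Perm (List Bool)) (w : List Bool) :
    ψ (g, h) (true :: w) = true :: h w := rfl

lemma ψ_eq_one {g h : Equiv.Perm (List Bool)} (H : ψ (g, h) = 1) : g = 1 ∧ h = 1 := by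
  constructor
  · apply Equiv.ext; intro w
    have := Equiv.ext_iff.1 H (false :: w)
    simpa using this
  · apply Equiv.ext; intro w
    have := Equiv.ext_iff.1 H (true :: w)
    simpa using this

lemma haa : a * a = ψ (c * a, c * a) := by
  apply Equiv.ext; intro w
  cases w with
  | nil => rfl
  | cons x w =>
    cases x <;> simp [a, c, Equiv.Perm.mul_apply, comm02]

lemma habc : a * b * c = ψ (c * (c * a), a * (a * a)) := by
  apply Equiv.ext; intro w
  cases w with
  | nil => rfl
  | cons x w =>
    cases x <;> simp [a, b, c, Equiv.Perm.mul_apply]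

lemma h3z : a * (a * a) = a ^ (3:ℤ) := by
  rw [show (3:ℤ) = ((3:ℕ):ℤ) by norm_num, zpow_natCast]
  rw [pow_succ, pow_succ, pow_one, mul_assoc]

lemma hx_psi : a * b⁻¹ = ψ ((a ^ (3:ℤ))⁻¹, a ^ (3:ℤ)) := by
  have hb : b⁻¹ = b * c := by
    have hc : c = (b * b)⁻¹ := by rw [hca, hab]
    rw [hc]; group
  have h1 : c * (c * a) = (a ^ (3:ℤ))⁻¹ := by
    rw [← h3z, hca]; group
  have h2 : a * b⁻¹ = a * b * c := by rw [hb, mul_assoc]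
  rw [h2, habc, h1, h3z]

lemma haa_z : a * a = ψ (a ^ (-1:ℤ), a ^ (-1:ℤ)) := by
  have : c * a = a ^ (-1:ℤ) := by rw [hca]; group
  rw [haa, this]

end Aut2212Aux

section Aut2212Aux2

lemma a_nil : a [] = [] := rfl

lemma a_zpow_nil (k : ℤ) : (a ^ k) [] = [] := by
  have h : a ∈ MulAction.stabilizer (Equiv.Perm (List Bool)) ([] : List Bool) := by
    simp [MulAction.mem_stabilizer_iff, Equiv.Perm.smul_def, a_nil]
  have := zpow_mem h k
  simpa [MulAction.mem_stabilizer_iff, Equiv.Perm.smul_def] using this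

lemma ψ_zpow (g h : Equiv.Perm (List Bool)) (m : ℤ) :
    (ψ (g, h)) ^ m = ψ (g ^ m, h ^ m) := by
  rw [← map_zpow]
  rfl

lemma ψ_pow (g h : Equiv.Perm (List Bool)) (m : ℕ) :
    (ψ (g, h)) ^ m = ψ (g ^ m, h ^ m) := by
  rw [← map_pow]
  rfl

lemma a_false : a [false] = [true] := rfl

lemma a_pow_ne_one : ∀ n : ℕ, 0 < n → a ^ n ≠ 1 := by
  intro n
  induction n using Nat.strong_induction_on with
  | _ n ih =>
    intro hn h1
    rcases Nat.even_or_odd n with ⟨m, hm⟩ | ⟨m, hm⟩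
    · have hmpos : 0 < m := by omega
      have h2 : a ^ n = ψ ((a ^ (-1:ℤ)) ^ m, (a ^ (-1:ℤ)) ^ m) := by
        rw [hm, ← two_mul, pow_mul, pow_two, haa_z, ψ_pow]
      rw [h2] at h1
      have h3 := (ψ_eq_one h1).1
      have h4 : a ^ m = 1 := by
        rw [zpow_neg_one, inv_pow] at h3
        exact inv_eq_one.1 h3
      exact ih m (by omega) hmpos h4
    · have h2 : (a ^ n) [false] = [true] := by
        rw [hm, pow_succ, pow_mul, pow_two, haa_z, ψ_pow, Equiv.Perm.mul_apply, a_false]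
        rw [ψ_apply_true]
        have : ((a ^ (-1:ℤ)) ^ m) [] = [] := by
          rw [← zpow_natCast (a ^ (-1:ℤ)) m, ← zpow_mul]
          exact a_zpow_nil _
        rw [this]
      rw [h1] at h2
      simp at h2

lemma a_zpow_eq_one {k : ℤ} (h : a ^ k = 1) : k = 0 := by
  obtain ⟨n, rfl | rfl⟩ := k.eq_nat_or_neg
  · have : n = 0 := by
      by_contra hne
      exact a_pow_ne_one n (Nat.pos_of_ne_zero hne) (by rwa [zpow_natCast] at h)
    simp [this]
  · have : n = 0 := by
      by_contra hne
      exact a_pow_ne_one n (Nat.pos_of_ne_zero hne)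
        (by rwa [zpow_neg, zpow_natCast, inv_eq_one] at h)
    simp [this]

lemma xa_even (m p : ℤ) :
    (a * b⁻¹) ^ m * a ^ (p + p) = ψ (a ^ (-(3*m) + -p), a ^ (3*m + -p)) := by
  have h1 : (a * b⁻¹) ^ m = ψ (a ^ (-(3*m)), a ^ (3*m)) := by
    rw [hx_psi, ψ_zpow, ← zpow_neg, ← zpow_mul, ← zpow_mul]
    norm_num
  have h2 : a ^ (p + p) = ψ (a ^ (-p), a ^ (-p)) := by
    have : a ^ (p + p) = (a * a) ^ p := by
      rw [zpow_add, ← (Commute.refl a).mul_zpow]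
    rw [this, haa_z, ψ_zpow, ← zpow_mul]
    norm_num
  rw [h1, h2, ← map_mul]
  rw [show ((a ^ (-(3*m)), a ^ (3*m)) * (a ^ (-p), a ^ (-p)) :
      Equiv.Perm (List Bool) × Equiv.Perm (List Bool)) =
      (a ^ (-(3*m)) * a ^ (-p), a ^ (3*m) * a ^ (-p)) from rfl, ← zpow_add, ← zpow_add]

lemma xa_eq_one {m n : ℤ} (h : (a * b⁻¹) ^ m * a ^ n = 1) : m = 0 ∧ n = 0 := by
  rcases Int.even_or_odd n with ⟨p, hp⟩ | ⟨p, hp⟩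
  · rw [hp, xa_even] at h
    obtain ⟨e1, e2⟩ := ψ_eq_one h
    have := a_zpow_eq_one e1
    have := a_zpow_eq_one e2
    omega
  · exfalso
    have hsplit : (a * b⁻¹) ^ m * a ^ n = ((a * b⁻¹) ^ m * a ^ (p + p)) * a := by
      rw [hp, show 2 * p + 1 = (p + p) + 1 by ring, zpow_add, zpow_one, mul_assoc]
    have e1 : ((a * b⁻¹) ^ m * a ^ n) [false] = [true] := by
      rw [hsplit, xa_even, Equiv.Perm.mul_apply, a_false, ψ_apply_true, a_zpow_nil]
    rw [h] at e1
    simp at e1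

lemma x_infinite_order : ¬ IsOfFinOrder (a * b⁻¹) := by
  intro hfin
  obtain ⟨n, hn, h1⟩ := isOfFinOrder_iff_pow_eq_one.1 hfin
  have h2 : (a * b⁻¹) ^ (n : ℤ) * a ^ (0 : ℤ) = 1 := by
    rw [zpow_natCast, zpow_zero, mul_one, h1]
  have := (xa_eq_one h2).1
  omega

end Aut2212Aux2

section Aut2212Aux3

/-- Conjugation facts in any group with `A X A⁻¹ = X⁻¹`. -/
lemma conj_base {G : Type*} [Group G] {A X : G} (h : A * X * A⁻¹ = X⁻¹) (n : ℤ) :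
    A ^ n * X * A ^ (-n) = X ∨ A ^ n * X * A ^ (-n) = X⁻¹ := by
  have h2 : A * X⁻¹ * A⁻¹ = X := by
    have := congrArg (·⁻¹) h
    simpa [mul_inv_rev, mul_assoc] using this
  have h2' : A⁻¹ * X⁻¹ * A = X := by
    conv_lhs => rw [← h]
    group
  have h' : A⁻¹ * X * A = X⁻¹ := by
    conv_lhs => rw [← h2]
    group
  induction n using Int.induction_on with
  | zero => left; simp
  | succ i ih =>
    have e : A ^ (i+1:ℤ) * X * A ^ (-(i+1:ℤ)) = A * (A ^ (i:ℤ) * X * A ^ (-i:ℤ)) * A⁻¹ := by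
      group
    rcases ih with hi | hi
    · right; rw [e, hi, h]
    · left; rw [e, hi, h2]
  | pred i ih =>
    have e : A ^ (-i-1:ℤ) * X * A ^ (-(-i-1:ℤ)) = A⁻¹ * (A ^ (-i:ℤ) * X * A ^ (i:ℤ)) * A := by
      group
    have e2 : A ^ (-i:ℤ) * X * A ^ (i:ℤ) = A ^ (-i:ℤ) * X * A ^ (-(-i:ℤ)) := by norm_num
    rcases ih with hi | hi
    · right
      rw [e, e2, hi, h']
    · left
      rw [e, e2, hi, h2']

lemma conj_X {G : Type*} [Group G] {A X : G} (h : A * X * A⁻¹ = X⁻¹) (n k : ℤ) :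
    ∃ j : ℤ, A ^ n * X ^ k * A ^ (-n) = X ^ j := by
  have base := conj_base h n
  have e : A ^ n * X ^ k * A ^ (-n) = (A ^ n * X * A ^ (-n)) ^ k := by
    rw [zpow_neg, conj_zpow]
  rcases base with hb | hb
  · exact ⟨k, by rw [e, hb]⟩
  · exact ⟨-k, by rw [e, hb, ← zpow_neg_one, ← zpow_mul]; norm_num⟩

/-- Normal form in a group generated by `A, B` with `A X A⁻¹ = X⁻¹`, `X = A B⁻¹`. -/
lemma normal_form_subgroup {G : Type*} [Group G] {A B : G}
    (h : A * (A * B⁻¹) * A⁻¹ = (A * B⁻¹)⁻¹) :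
    ∃ S : Subgroup G, (∀ g, g ∈ S ↔ ∃ m n : ℤ, g = (A * B⁻¹) ^ m * A ^ n) := by
  set X := A * B⁻¹ with hX
  refine ⟨{ carrier := {g | ∃ m n : ℤ, g = X ^ m * A ^ n}
            one_mem' := ⟨0, 0, by simp⟩
            mul_mem' := ?_
            inv_mem' := ?_ }, fun g => Iff.rfl⟩
  · rintro g g' ⟨m, n, rfl⟩ ⟨k, l, rfl⟩
    obtain ⟨j, hj⟩ := conj_X h n k
    refine ⟨m + j, n + l, ?_⟩
    have : A ^ n * X ^ k = X ^ j * A ^ n := by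
      rw [← hj]; group
    calc X ^ m * A ^ n * (X ^ k * A ^ l) = X ^ m * (A ^ n * X ^ k) * A ^ l := by group
      _ = X ^ m * (X ^ j * A ^ n) * A ^ l := by rw [this]
      _ = X ^ (m + j) * A ^ (n + l) := by rw [zpow_add, zpow_add]; group
  · rintro g ⟨m, n, rfl⟩
    obtain ⟨j, hj⟩ := conj_X h (-n) (-m)
    refine ⟨j, -n, ?_⟩
    have : A ^ (-n) * X ^ (-m) = X ^ j * A ^ (-n) := by
      rw [← hj]; group
    calc (X ^ m * A ^ n)⁻¹ = A ^ (-n) * X ^ (-m) := by group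
      _ = X ^ j * A ^ (-n) := this

/-- The relation `A² = B²` holds in the Klein-bottle presented group. -/
lemma relG : (PresentedGroup.of 0 : PresentedGroup relsKlein) ^ 2 = PresentedGroup.of 1 ^ 2 := by
  have h : PresentedGroup.mk relsKlein (FreeGroup.of 0 ^ 2 * (FreeGroup.of 1 ^ 2)⁻¹) = 1 :=
    (QuotientGroup.eq_one_iff _).2
      (Subgroup.subset_normalClosure (Set.mem_singleton _))
  rw [map_mul, map_pow, map_inv, map_pow] at h
  exact mul_inv_eq_one.1 h

lemma conj_rel_of_sq_eq {G : Type*} [Group G] {A B : G} (h : A ^ 2 = B ^ 2) :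
    A * (A * B⁻¹) * A⁻¹ = (A * B⁻¹)⁻¹ := by
  calc A * (A * B⁻¹) * A⁻¹ = A ^ 2 * (B⁻¹ * A⁻¹) := by rw [pow_two]; group
    _ = B ^ 2 * (B⁻¹ * A⁻¹) := by rw [h]
    _ = B * A⁻¹ := by group
    _ = (A * B⁻¹)⁻¹ := by rw [mul_inv_rev, inv_inv]

lemma G_normal_form (g : PresentedGroup relsKlein) :
    ∃ m n : ℤ, g = (PresentedGroup.of 0 * (PresentedGroup.of 1)⁻¹) ^ m
      * (PresentedGroup.of 0 : PresentedGroup relsKlein) ^ n := by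
  obtain ⟨S, hS⟩ := normal_form_subgroup (conj_rel_of_sq_eq relG)
  rw [← hS]
  have hgen : ∀ i : Fin 2, PresentedGroup.of (rels := relsKlein) i ∈ S := by
    intro i
    fin_cases i
    · rw [hS]
      exact ⟨0, 1, by simp⟩
    · rw [hS]
      refine ⟨-1, 1, ?_⟩
      show PresentedGroup.of 1 = _
      rw [zpow_neg_one, zpow_one, mul_inv_rev, inv_inv]
      group
  have htop : (⊤ : Subgroup (PresentedGroup relsKlein)) ≤ S := by
    rw [← PresentedGroup.closure_range_of relsKlein]
    apply (Subgroup.closure_le _).2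
    rintro _ ⟨i, rfl⟩
    exact hgen i
  exact htop (Subgroup.mem_top g)

noncomputable def φ : PresentedGroup relsKlein →* Equiv.Perm (List Bool) :=
  PresentedGroup.toGroup (f := ![a, b]) (by
    intro r hr
    rw [relsKlein, Set.mem_singleton_iff] at hr
    subst hr
    rw [map_mul, map_pow, map_inv, map_pow, FreeGroup.lift_apply_of, FreeGroup.lift_apply_of]
    simp only [Matrix.cons_val_zero, Matrix.cons_val_one, Matrix.head_cons]
    rw [mul_inv_eq_one, pow_two, pow_two]
    exact hab)

lemma φ_of0 : φ (PresentedGroup.of 0) = a := by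
  rw [φ, PresentedGroup.toGroup.of]
  simp

lemma φ_of1 : φ (PresentedGroup.of 1) = b := by
  rw [φ, PresentedGroup.toGroup.of]
  simp

lemma φ_inj : Function.Injective φ := by
  rw [injective_iff_map_eq_one]
  intro g hg
  obtain ⟨m, n, rfl⟩ := G_normal_form g
  rw [map_mul, map_zpow, map_zpow, map_mul, map_inv, φ_of0, φ_of1] at hg
  obtain ⟨hm, hn⟩ := xa_eq_one hg
  rw [hm, hn]
  simp

lemma φ_range : φ.range = Subgroup.closure {a, b, c} := by
  have himg : ⇑φ '' Set.range (PresentedGroup.of (rels := relsKlein)) = {a, b} := by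
    ext x
    constructor
    · rintro ⟨_, ⟨i, rfl⟩, rfl⟩
      fin_cases i
      · left; exact φ_of0
      · right; exact φ_of1
    · rintro (rfl | rfl)
      · exact ⟨_, ⟨0, rfl⟩, φ_of0⟩
      · exact ⟨_, ⟨1, rfl⟩, φ_of1⟩
  have h1 : φ.range = Subgroup.closure {a, b} := by
    rw [MonoidHom.range_eq_map, ← PresentedGroup.closure_range_of relsKlein,
      MonoidHom.map_closure, himg]
  rw [h1]
  apply le_antisymm
  · apply Subgroup.closure_mono
    intro x hx
    rcases hx with rfl | hx
    · exact Set.mem_insert _ _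
    · rw [Set.mem_singleton_iff] at hx
      subst hx
      exact Set.mem_insert_of_mem _ (Set.mem_insert _ _)
  · apply (Subgroup.closure_le _).2
    have ha : a ∈ Subgroup.closure ({a, b} : Set (Equiv.Perm (List Bool))) :=
      Subgroup.subset_closure (Set.mem_insert _ _)
    have hb : b ∈ Subgroup.closure ({a, b} : Set (Equiv.Perm (List Bool))) :=
      Subgroup.subset_closure (Set.mem_insert_of_mem _ (Set.mem_singleton _))
    rintro x (rfl | rfl | hx)
    · exact ha
    · exact hb
    · rw [Set.mem_singleton_iff] at hx
      subst hx
      rw [hca]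
      exact inv_mem (mul_mem ha ha)

end Aut2212Aux3

/-- The group generated by automaton 2212 is the Klein bottle group:
`c = a⁻²`, the element `x = ab⁻¹` has infinite order and is inverted by
conjugation by `a`, and the group generated by `a`, `b`, `c` is isomorphic to
`⟨a, b ∣ a² = b²⟩` via an isomorphism sending the presentation generators to
`a` and `b`. -/
theorem automaton2212_group_is_klein_bottle_group :
    c = (a ^ 2)⁻¹ ∧
    ¬ IsOfFinOrder (a * b⁻¹) ∧
    a * (a * b⁻¹) * a⁻¹ = (a * b⁻¹)⁻¹ ∧
    ∃ e : PresentedGroup relsKlein ≃* ↥(Subgroup.closure {a, b, c}),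
      (↑(e (PresentedGroup.of 0)) : Equiv.Perm (List Bool)) = a ∧
      (↑(e (PresentedGroup.of 1)) : Equiv.Perm (List Bool)) = b := by
  have hconj : a * (a * b⁻¹) * a⁻¹ = (a * b⁻¹)⁻¹ :=
    conj_rel_of_sq_eq (by rw [pow_two, pow_two]; exact hab)
  refine ⟨by rw [pow_two]; exact hca, x_infinite_order, hconj, ?_⟩
  have hmem : ∀ g, φ g ∈ Subgroup.closure {a, b, c} := fun g => φ_range ▸ ⟨g, rfl⟩
  have hbij : Function.Bijective (φ.codRestrict (Subgroup.closure {a, b, c}) hmem) := by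
    constructor
    · intro g h hgh
      exact φ_inj (congrArg Subtype.val hgh)
    · rintro ⟨y, hy⟩
      have hy' : y ∈ φ.range := φ_range ▸ hy
      obtain ⟨g, hg⟩ := hy'
      exact ⟨g, Subtype.ext hg⟩
  refine ⟨MulEquiv.ofBijective _ hbij, ?_, ?_⟩
  · exact φ_of0
  · exact φ_of1
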